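/- Let X be a two-dimensional real normed space with unit sphere S and 0 < ρ < 1, satisfying property (P-ρS). For every u ∈ S there is a unique u⊥ ∈ S with u ≺ u⊥ such that u is Birkhoff-orthogonal to u⊥, i.e., ‖u‖ ≤ ‖u + λ u⊥‖ for all real λ. -/

import Mathlib

open Real Set

/-- `N` is a norm on the two-dimensional real vector space `ℝ × ℝ`. -/
def IsNorm (N : ℝ × ℝ → ℝ) : Prop :=
  (∀ x, N x = 0 ↔ x = 0) ∧ (∀ (a : ℝ) (x : ℝ × ℝ), N (a • x) = |a| * N x) ∧
    ∀ x y, N (x + y) ≤ N x + N y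

/-- The 2D cross product `u ∧ v`; `u ≺ v` means `0 < wedge u v`. -/
def wedge (u v : ℝ × ℝ) : ℝ := u.1 * v.2 - u.2 * v.1

/-- `inf_{t ∈ [0,1]} N ((1−t)u + tv)`, the minimal `N`-norm on the segment `[u,v]`. -/
noncomputable def segInf (N : ℝ × ℝ → ℝ) (u v : ℝ × ℝ) : ℝ :=
  sInf ((fun t : ℝ => N ((1 - t) • u + t • v)) '' Icc (0:ℝ) 1)

/-- Property (P-ρS): every chord of the unit sphere of `N` that supports `ρS`
touches `ρS` at its midpoint. -/
def PropP (N : ℝ × ℝ → ℝ) (ρ : ℝ) : Prop :=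
  ∀ u v : ℝ × ℝ, N u = 1 → N v = 1 → segInf N u v = ρ →
    N ((1/2 : ℝ) • u + (1/2 : ℝ) • v) = ρ

/-!
Birkhoff orthogonality `u ⊥ w` means that some functional supporting the unit ball at `u`
vanishes on `w`. Hence existence is Hahn–Banach, and uniqueness (for the orientation `u ≺ w`)
is smoothness of the unit sphere `S` at `u`.

Property (P-ρS) first forces strict convexity. If `f` supports the unit ball at `M`, the
midpoint `m` of the chord `S ∩ {f = ρ}` has norm `ρ`, so `m / ρ` is another norming point
of `f`. Tilting `f` by small multiples of a functional `g` with `g M = 0` pushes all norming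
points into `{g ≥ 0}`; as chords depend continuously on the functional, `g m ≥ 0` in the limit.
For `g = ± wedge M` this puts `m` on `ℝ M`, hence `M = m / ρ`: every functional has exactly
one norming point.

If `u` were a corner with supporting functionals `f₁ ≠ f₂`, then for each `f` among
`f₁, f₂, (f₁ + f₂) / 2` the chord `S ∩ {f = ρ}` would be centred at `ρ u`, i.e. its endpoints
`p` satisfy `p - 2ρu ∈ S`. This yields three points of `S ∩ (S + 2ρu)`, which is impossible
for a strictly convex curve.
-/

open Filter Topology

section

variable {N : ℝ × ℝ → ℝ} {ρ : ℝ}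

namespace IsNorm

theorem map_zero (hN : IsNorm N) : N 0 = 0 := (hN.1 0).2 rfl

theorem map_neg (hN : IsNorm N) (x : ℝ × ℝ) : N (-x) = N x := by
  simpa using hN.2.1 (-1) x

theorem smul_of_nonneg (hN : IsNorm N) {a : ℝ} (ha : 0 ≤ a) (x : ℝ × ℝ) :
    N (a • x) = a * N x := by
  rw [hN.2.1, abs_of_nonneg ha]

theorem nonneg (hN : IsNorm N) (x : ℝ × ℝ) : 0 ≤ N x := by
  have := hN.2.2 x (-x)
  rw [add_neg_cancel, hN.map_zero, hN.map_neg] at this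
  linarith

theorem ne_zero_of_eq_one (hN : IsNorm N) {x : ℝ × ℝ} (hx : N x = 1) : x ≠ 0 := by
  rintro rfl
  simp [hN.map_zero] at hx

theorem pos (hN : IsNorm N) {x : ℝ × ℝ} (hx : x ≠ 0) : 0 < N x :=
  (hN.nonneg x).lt_of_ne fun h => hx ((hN.1 x).1 h.symm)

theorem inv_smul_self (hN : IsNorm N) {x : ℝ × ℝ} (hx : x ≠ 0) : N ((N x)⁻¹ • x) = 1 := by
  rw [hN.smul_of_nonneg (inv_nonneg.2 (hN.nonneg x)), inv_mul_cancel₀ (hN.pos hx).ne']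

theorem comb_le (hN : IsNorm N) {a b : ℝ} (ha : 0 ≤ a) (hb : 0 ≤ b) (x y : ℝ × ℝ) :
    N (a • x + b • y) ≤ a * N x + b * N y := by
  rw [← hN.smul_of_nonneg ha, ← hN.smul_of_nonneg hb]
  exact hN.2.2 _ _

theorem convexOn (hN : IsNorm N) : ConvexOn ℝ univ N :=
  ⟨convex_univ, fun x _ y _ _ _ ha hb _ => hN.comb_le ha hb x y⟩

theorem convexOn_line (hN : IsNorm N) (a v : ℝ × ℝ) :
    ConvexOn ℝ univ fun s : ℝ => N (a + s • v) := by
  refine ⟨convex_univ, fun s _ t _ α β hα hβ hαβ => ?_⟩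
  have : a + (α • s + β • t) • v = α • (a + s • v) + β • (a + t • v) := by
    linear_combination (norm := module) -hαβ • a
  simp only [smul_eq_mul] at this ⊢
  rw [this]
  exact hN.comb_le hα hβ _ _

theorem continuous (hN : IsNorm N) : Continuous N :=
  continuousOn_univ.1 (hN.convexOn.continuousOn isOpen_univ)

theorem exists_mul_norm_le (hN : IsNorm N) : ∃ c > 0, ∀ x, c * ‖x‖ ≤ N x := by
  obtain ⟨x₀, hx₀, hmin⟩ := (isCompact_sphere (0 : ℝ × ℝ) 1).exists_isMinOn
    ⟨(1, 0), by simp [Prod.norm_def]⟩ hN.continuous.continuousOn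
  refine ⟨N x₀, hN.pos (ne_zero_of_mem_unit_sphere ⟨x₀, hx₀⟩), fun x => ?_⟩
  rcases eq_or_ne x 0 with rfl | hx
  · simp [hN.map_zero]
  have hx' : 0 < ‖x‖ := norm_pos_iff.2 hx
  have hmem : ‖x‖⁻¹ • x ∈ Metric.sphere (0 : ℝ × ℝ) 1 := by
    simp [norm_smul, hx'.ne']
  calc N x₀ * ‖x‖ ≤ N (‖x‖⁻¹ • x) * ‖x‖ := by gcongr; exact hmin hmem
    _ = N x := by rw [hN.smul_of_nonneg (inv_nonneg.2 hx'.le)]; field_simp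

theorem isCompact_sphere (hN : IsNorm N) : IsCompact {x | N x = 1} := by
  obtain ⟨c, hc, hle⟩ := hN.exists_mul_norm_le
  refine (isCompact_closedBall (0 : ℝ × ℝ) c⁻¹).of_isClosed_subset
    (isClosed_eq hN.continuous continuous_const) fun x (hx : N x = 1) => ?_
  rw [mem_closedBall_zero_iff, ← one_div, le_div_iff₀ hc]
  linarith [hle x]

end IsNorm

theorem ConvexOn.existsUnique_pos_eq {g : ℝ → ℝ} (hg : ConvexOn ℝ univ g) {c s₁ : ℝ}
    (h0 : g 0 < c) (hs₁ : 0 < s₁) (h1 : c ≤ g s₁) : ∃! s, 0 < s ∧ g s = c := by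
  obtain ⟨s, hs, hgs⟩ := intermediate_value_Icc hs₁.le
    ((hg.continuousOn isOpen_univ).mono (subset_univ _)) ⟨h0.le, h1⟩
  have hs0 : 0 < s := hs.1.lt_of_ne (by rintro rfl; exact h0.ne hgs)
  have below : ∀ a b, 0 < a → a < b → g b = c → g a < c := by
    intro a b ha hab hb
    have hb0 : 0 < b := ha.trans hab
    have hθ : a / b < 1 := (div_lt_one hb0).2 hab
    calc g a = g ((1 - a / b) • 0 + (a / b) • b) := by
          congr 1; simp only [smul_eq_mul]; field_simp; ring
      _ ≤ (1 - a / b) • g 0 + (a / b) • g b :=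
          hg.2 (mem_univ _) (mem_univ _) (by linarith) (by positivity) (by ring)
      _ < c := by
          simp only [smul_eq_mul, hb]
          nlinarith
  refine ⟨s, ⟨hs0, hgs⟩, fun s' ⟨hs'0, hgs'⟩ => ?_⟩
  rcases lt_trichotomy s' s with h | h | h
  · exact absurd hgs' (below _ _ hs'0 h hgs).ne
  · exact h
  · exact absurd hgs (below _ _ hs0 h hgs').ne

@[simp] theorem wedge_zero_left (x : ℝ × ℝ) : wedge 0 x = 0 := by
  simp [wedge]

@[simp] theorem wedge_self (a : ℝ × ℝ) : wedge a a = 0 := by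
  simp only [wedge]; ring

theorem wedge_comm (a b : ℝ × ℝ) : wedge a b = -wedge b a := by
  simp only [wedge]; ring

@[simp] theorem wedge_add_left (a b x : ℝ × ℝ) : wedge (a + b) x = wedge a x + wedge b x := by
  simp only [wedge, Prod.fst_add, Prod.snd_add]; ring

@[simp] theorem wedge_add_right (a x y : ℝ × ℝ) : wedge a (x + y) = wedge a x + wedge a y := by
  simp only [wedge, Prod.fst_add, Prod.snd_add]; ring

@[simp] theorem wedge_sub_right (a x y : ℝ × ℝ) : wedge a (x - y) = wedge a x - wedge a y := by
  simp only [wedge, Prod.fst_sub, Prod.snd_sub]; ring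

@[simp] theorem wedge_neg_left (a x : ℝ × ℝ) : wedge (-a) x = -wedge a x := by
  simp only [wedge, Prod.fst_neg, Prod.snd_neg]; ring

@[simp] theorem wedge_neg_right (a x : ℝ × ℝ) : wedge a (-x) = -wedge a x := by
  simp only [wedge, Prod.fst_neg, Prod.snd_neg]; ring

@[simp] theorem wedge_smul_left (r : ℝ) (a x : ℝ × ℝ) : wedge (r • a) x = r * wedge a x := by
  simp only [wedge, Prod.smul_fst, Prod.smul_snd, smul_eq_mul]; ring

@[simp] theorem wedge_smul_right (r : ℝ) (a x : ℝ × ℝ) : wedge a (r • x) = r * wedge a x := by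
  simp only [wedge, Prod.smul_fst, Prod.smul_snd, smul_eq_mul]; ring

theorem continuous_wedge : Continuous fun z : (ℝ × ℝ) × (ℝ × ℝ) => wedge z.1 z.2 := by
  unfold wedge; fun_prop

theorem wedge_smul_eq (a b x : ℝ × ℝ) : wedge a b • x = wedge x b • a + wedge a x • b := by
  ext <;> simp only [wedge, Prod.smul_fst, Prod.smul_snd, Prod.fst_add, Prod.snd_add,
    smul_eq_mul] <;> ring

theorem exists_eq_smul_of_wedge_eq_zero {a x : ℝ × ℝ} (ha : a ≠ 0) (h : wedge a x = 0) :
    ∃ r : ℝ, x = r • a := by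
  set b : ℝ × ℝ := (-a.2, a.1)
  have hab : wedge a b ≠ 0 := by
    have : wedge a b = a.1 ^ 2 + a.2 ^ 2 := by simp only [b, wedge]; ring
    rw [this]
    contrapose! ha
    ext <;> simp only [Prod.fst_zero, Prod.snd_zero] <;> nlinarith [sq_nonneg a.1, sq_nonneg a.2]
  refine ⟨wedge x b / wedge a b, ?_⟩
  calc x = (wedge a b)⁻¹ • (wedge a b • x) := by rw [smul_smul, inv_mul_cancel₀ hab, one_smul]
    _ = _ := by rw [wedge_smul_eq a b x, h, zero_smul, add_zero, smul_smul, div_eq_inv_mul]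

theorem LinearMap.wedge_eq_apply (g : ℝ × ℝ →ₗ[ℝ] ℝ) (x : ℝ × ℝ) :
    wedge (g (0, 1), -g (1, 0)) x = g x := by
  conv_rhs => rw [show x = x.1 • ((1 : ℝ), (0 : ℝ)) + x.2 • ((0 : ℝ), (1 : ℝ)) by ext <;> simp]
  simp only [map_add, map_smul, smul_eq_mul, wedge]
  ring

/-- Linear functionals on `ℝ²` are encoded as `wedge k` (see `LinearMap.wedge_eq_apply`);
the kernel of `wedge k` is `ℝ k`. -/
structure SupportsAt (N : ℝ × ℝ → ℝ) (k M : ℝ × ℝ) : Prop where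
  le : ∀ x, wedge k x ≤ N x
  norm_eq : N M = 1
  wedge_eq : wedge k M = 1

theorem exists_supportsAt (hN : IsNorm N) {M : ℝ × ℝ} (hM : N M = 1) : ∃ k, SupportsAt N k M := by
  have hM0 := hN.ne_zero_of_eq_one hM
  let f : ℝ × ℝ →ₗ.[ℝ] ℝ := LinearPMap.mkSpanSingleton M 1 hM0
  obtain ⟨g, hgf, hg⟩ := exists_extension_of_le_sublinear f N
    (fun c hc x => hN.smul_of_nonneg hc.le x) hN.2.2 <| by
      rintro ⟨x, hx⟩
      obtain ⟨a, rfl⟩ := Submodule.mem_span_singleton.1 hx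
      simp only [f, LinearPMap.mkSpanSingleton'_apply, hN.2.1, hM, smul_eq_mul, mul_one]
      exact le_abs_self a
  refine ⟨(g (0, 1), -g (1, 0)), fun x => ?_, hM, ?_⟩
  · rw [LinearMap.wedge_eq_apply]; exact hg x
  · rw [LinearMap.wedge_eq_apply]
    exact (hgf ⟨M, Submodule.mem_span_singleton_self M⟩).trans
      (LinearPMap.mkSpanSingleton_apply ℝ ℝ hM0 1)

namespace SupportsAt

variable {k M : ℝ × ℝ}

theorem ne_zero (hk : SupportsAt N k M) : k ≠ 0 := by
  rintro rfl
  simpa [wedge] using hk.wedge_eq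

theorem le_norm_add_smul (hk : SupportsAt N k M) {w : ℝ × ℝ} (hw : wedge k w = 0) (l : ℝ) :
    N M ≤ N (M + l • w) := by
  calc N M = wedge k (M + l • w) := by simp [hw, hk.wedge_eq, hk.norm_eq]
    _ ≤ N (M + l • w) := hk.le _

end SupportsAt

theorem supportsAt_of_le_norm_add_smul (hN : IsNorm N) {u w : ℝ × ℝ} (hu : N u = 1)
    (hwu : wedge w u ≠ 0) (hB : ∀ l : ℝ, N u ≤ N (u + l • w)) :
    SupportsAt N ((wedge w u)⁻¹ • w) u := by
  refine ⟨fun x => ?_, hu, by simp [hwu]⟩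
  set s := wedge ((wedge w u)⁻¹ • w) x
  obtain ⟨t, ht⟩ : ∃ t : ℝ, x - s • u = t • w :=
    exists_eq_smul_of_wedge_eq_zero (fun h => by simp [h] at hwu) (by simp [s]; field_simp; ring)
  rcases le_or_gt s 0 with hs | hs
  · exact hs.trans (hN.nonneg x)
  calc s = s * N u := by rw [hu, mul_one]
    _ ≤ s * N (u + (t / s) • w) := by gcongr; exact hB _
    _ = N x := by
      rw [← hN.smul_of_nonneg hs.le, smul_add, smul_smul, mul_div_cancel₀ _ hs.ne', ← ht]
      abel_nf

theorem IsNorm.existsUnique_pos_norm_add_smul_eq_one (hN : IsNorm N) {a v : ℝ × ℝ}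
    (ha : N a < 1) (hv : v ≠ 0) : ∃! s : ℝ, 0 < s ∧ N (a + s • v) = 1 := by
  have hv' := hN.pos hv
  refine (hN.convexOn_line a v).existsUnique_pos_eq (by simpa using ha)
    (div_pos two_pos hv') ?_
  have := hN.2.2 (a + (2 / N v) • v) (-a)
  rw [add_neg_cancel_comm, hN.map_neg, hN.smul_of_nonneg (by positivity),
    div_mul_cancel₀ _ hv'.ne'] at this
  linarith

theorem midpoint_eq_half_smul_add_half_smul (p q : ℝ × ℝ) :
    midpoint ℝ p q = (1 / 2 : ℝ) • p + (1 / 2 : ℝ) • q := by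
  rw [midpoint_eq_smul_add, smul_add, invOf_eq_inv, one_div]

theorem segInf_eq_of_isLeast {p q : ℝ × ℝ} {r : ℝ} (h : IsLeast (N '' segment ℝ p q) r) :
    segInf N p q = r := by
  rw [segInf, ← h.csInf_eq, segment_eq_image, image_image]

structure IsChord (N : ℝ × ℝ → ℝ) (k : ℝ × ℝ) (ρ : ℝ) (p q : ℝ × ℝ) : Prop where
  ne : p ≠ q
  norm_left : N p = 1
  norm_right : N q = 1
  wedge_left : wedge k p = ρ
  wedge_right : wedge k q = ρ

theorem IsChord.wedge_midpoint {k p q : ℝ × ℝ} (h : IsChord N k ρ p q) :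
    wedge k (midpoint ℝ p q) = ρ := by
  rw [midpoint_eq_half_smul_add_half_smul]
  simp only [wedge_add_right, wedge_smul_right, h.wedge_left, h.wedge_right]
  ring

namespace SupportsAt

variable {k M : ℝ × ℝ}

theorem exists_isChord (hN : IsNorm N) (hρ0 : 0 < ρ) (hρ1 : ρ < 1) (hk : SupportsAt N k M) :
    ∃ p q, IsChord N k ρ p q ∧ ρ • M ∈ segment ℝ p q ∧
      ∀ x, N x = 1 → wedge k x = ρ → x = p ∨ x = q := by
  have hρM : N (ρ • M) = ρ := by rw [hN.smul_of_nonneg hρ0.le, hk.norm_eq, mul_one]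
  obtain ⟨s, ⟨hs0, hs⟩, hsu⟩ :=
    hN.existsUnique_pos_norm_add_smul_eq_one (hρM.trans_lt hρ1) hk.ne_zero
  obtain ⟨t, ⟨ht0, ht⟩, htu⟩ :=
    hN.existsUnique_pos_norm_add_smul_eq_one (hρM.trans_lt hρ1) (neg_ne_zero.2 hk.ne_zero)
  have hwedge (r : ℝ) : wedge k (ρ • M + r • k) = ρ := by simp [hk.wedge_eq]
  refine ⟨ρ • M + s • k, ρ • M + t • -k, ⟨?_, hs, ht, hwedge s, by simpa using hwedge (-t)⟩,
    ⟨t / (s + t), s / (s + t), by positivity, by positivity, by field_simp; ring, ?_⟩, ?_⟩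
  · intro h
    have : (s + t) • k = 0 := by linear_combination (norm := module) h
    exact hk.ne_zero ((smul_eq_zero.1 this).resolve_left (by positivity))
  · have : t / (s + t) + s / (s + t) = 1 := by field_simp; ring
    linear_combination (norm := module) this • (ρ • M)
  · intro x hx hkx
    obtain ⟨r, hr⟩ := exists_eq_smul_of_wedge_eq_zero hk.ne_zero
      (show wedge k (x - ρ • M) = 0 by simp [hkx, hk.wedge_eq])
    rw [sub_eq_iff_eq_add'] at hr
    subst hr
    rcases lt_trichotomy r 0 with h | rfl | h
    · right
      rw [← htu (-r) ⟨neg_pos.2 h, by simpa using hx⟩, neg_smul_neg]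
    · simp [hρM] at hx
      linarith
    · left
      rw [hsu r ⟨h, hx⟩]

theorem midpoint_eq (hN : IsNorm N) (hρ0 : 0 < ρ) (hρ1 : ρ < 1) (hk : SupportsAt N k M)
    {p q p' q' : ℝ × ℝ} (h : IsChord N k ρ p q) (h' : IsChord N k ρ p' q') :
    midpoint ℝ p q = midpoint ℝ p' q' := by
  obtain ⟨P, Q, -, -, huniq⟩ := hk.exists_isChord hN hρ0 hρ1
  suffices key : ∀ p q, IsChord N k ρ p q → midpoint ℝ p q = midpoint ℝ P Q from
    (key p q h).trans (key p' q' h').symm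
  intro p q h
  rcases huniq p h.norm_left h.wedge_left with rfl | rfl <;>
    rcases huniq q h.norm_right h.wedge_right with rfl | rfl
  exacts [absurd rfl h.ne, rfl, midpoint_comm _ _, absurd rfl h.ne]

theorem norm_midpoint (hN : IsNorm N) (hρ0 : 0 < ρ) (hρ1 : ρ < 1) (hP : PropP N ρ)
    (hk : SupportsAt N k M) {p q : ℝ × ℝ} (h : IsChord N k ρ p q) :
    N (midpoint ℝ p q) = ρ := by
  obtain ⟨P, Q, hPQ, hseg, -⟩ := hk.exists_isChord hN hρ0 hρ1
  rw [hk.midpoint_eq hN hρ0 hρ1 h hPQ, midpoint_eq_half_smul_add_half_smul]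
  refine hP P Q hPQ.norm_left hPQ.norm_right (segInf_eq_of_isLeast
    ⟨⟨ρ • M, hseg, by rw [hN.smul_of_nonneg hρ0.le, hk.norm_eq, mul_one]⟩, ?_⟩)
  rintro _ ⟨_, ⟨a, b, -, -, hab, rfl⟩, rfl⟩
  calc ρ = wedge k (a • P + b • Q) := by
        simp only [wedge_add_right, wedge_smul_right, hPQ.wedge_left, hPQ.wedge_right]
        linear_combination -ρ * hab
    _ ≤ N (a • P + b • Q) := hk.le _

theorem supportsAt_inv_smul_midpoint (hN : IsNorm N) (hρ0 : 0 < ρ) (hρ1 : ρ < 1)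
    (hP : PropP N ρ) (hk : SupportsAt N k M) {p q : ℝ × ℝ} (h : IsChord N k ρ p q) :
    SupportsAt N k (ρ⁻¹ • midpoint ℝ p q) where
  le := hk.le
  norm_eq := by
    rw [hN.smul_of_nonneg (inv_nonneg.2 hρ0.le), hk.norm_midpoint hN hρ0 hρ1 hP h,
      inv_mul_cancel₀ hρ0.ne']
  wedge_eq := by rw [wedge_smul_right, h.wedge_midpoint, inv_mul_cancel₀ hρ0.ne']

end SupportsAt

theorem IsNorm.exists_isMaxOn_wedge (hN : IsNorm N) (h : ℝ × ℝ) :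
    ∃ M, N M = 1 ∧ ∀ x, N x = 1 → wedge h x ≤ wedge h M := by
  have hS : {x | N x = 1}.Nonempty :=
    ⟨_, hN.inv_smul_self (x := (1, 0)) (by simp)⟩
  obtain ⟨M, hM, hmax⟩ := hN.isCompact_sphere.exists_isMaxOn hS
    (continuous_wedge.comp (continuous_const.prodMk continuous_id)).continuousOn
  exact ⟨M, hM, fun x hx => hmax hx⟩

theorem IsNorm.wedge_le_mul (hN : IsNorm N) {h : ℝ × ℝ} {c : ℝ}
    (hmax : ∀ x, N x = 1 → wedge h x ≤ c) (x : ℝ × ℝ) : wedge h x ≤ c * N x := by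
  rcases eq_or_ne x 0 with rfl | hx
  · simp [wedge, hN.map_zero]
  have := hmax _ (hN.inv_smul_self hx)
  rwa [wedge_smul_right, inv_mul_le_iff₀ (hN.pos hx), mul_comm] at this

namespace SupportsAt

variable {k M : ℝ × ℝ}

theorem exists_tendsto_tilt (hN : IsNorm N) (hk : SupportsAt N k M) {h : ℝ × ℝ}
    (hh : wedge h M = 0) :
    ∃ k' M' : ℕ → ℝ × ℝ, Tendsto k' atTop (𝓝 k) ∧ (∀ n, SupportsAt N (k' n) (M' n)) ∧
      ∀ n x, SupportsAt N (k' n) x → 0 ≤ wedge h x := by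
  obtain ⟨X, -, hC⟩ := hN.exists_isMaxOn_wedge h
  set ε : ℕ → ℝ := fun n => 1 / ((n : ℝ) + 1)
  have hε0 (n : ℕ) : 0 < ε n := by positivity
  choose M' hM' hmax using fun n => hN.exists_isMaxOn_wedge (k + ε n • h)
  set c : ℕ → ℝ := fun n => wedge (k + ε n • h) (M' n)
  have hc1 (n : ℕ) : 1 ≤ c n := by
    simpa [c, hk.wedge_eq, hh] using hmax n M hk.norm_eq
  have hcC (n : ℕ) : c n ≤ 1 + ε n * wedge h X := by
    have hkM := (hk.le (M' n)).trans_eq (hM' n)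
    have hhM := mul_le_mul_of_nonneg_left (hC _ (hM' n)) (hε0 n).le
    simp only [c, wedge_add_left, wedge_smul_left]
    linarith
  have hε : Tendsto ε atTop (𝓝 0) := tendsto_one_div_add_atTop_nhds_zero_nat
  have hc : Tendsto c atTop (𝓝 1) :=
    tendsto_of_tendsto_of_tendsto_of_le_of_le tendsto_const_nhds
      (by simpa using (hε.mul_const (wedge h X)).const_add 1) hc1 hcC
  refine ⟨fun n => (c n)⁻¹ • (k + ε n • h), M', ?_, fun n => ?_, fun n x hx => ?_⟩
  · simpa using (hc.inv₀ one_ne_zero).smul (tendsto_const_nhds.add (hε.smul_const h))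
  · have hc0 : 0 < c n := one_pos.trans_le (hc1 n)
    refine ⟨fun x => ?_, hM' n, ?_⟩
    · rw [wedge_smul_left, inv_mul_le_iff₀ hc0]
      exact hN.wedge_le_mul (hmax n) x
    · rw [wedge_smul_left, inv_mul_cancel₀ hc0.ne']
  · have hx1 := hx.wedge_eq
    rw [wedge_smul_left, inv_mul_eq_one₀ (one_pos.trans_le (hc1 n)).ne'] at hx1
    have hkx := (hk.le x).trans_eq hx.norm_eq
    have : 0 ≤ ε n * wedge h x := by
      simp only [wedge_add_left, wedge_smul_left] at hx1
      linarith [hc1 n]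
    exact (mul_nonneg_iff_of_pos_left (hε0 n)).1 this

theorem exists_tendsto_midpoint (hN : IsNorm N) (hρ0 : 0 < ρ) (hρ1 : ρ < 1)
    (hk : SupportsAt N k M) {p₀ q₀ : ℝ × ℝ} (h₀ : IsChord N k ρ p₀ q₀) {k' p q : ℕ → ℝ × ℝ}
    (hk' : Tendsto k' atTop (𝓝 k)) (hpq : ∀ n, IsChord N (k' n) ρ (p n) (q n))
    (hmid : ∀ n, N (midpoint ℝ (p n) (q n)) = ρ) :
    ∃ φ : ℕ → ℕ, StrictMono φ ∧
      Tendsto (fun n => midpoint ℝ (p (φ n)) (q (φ n))) atTop (𝓝 (midpoint ℝ p₀ q₀)) := by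
  obtain ⟨⟨p', q'⟩, ⟨hp', hq'⟩, φ, hφ, hlim⟩ :=
    (hN.isCompact_sphere.prod hN.isCompact_sphere).tendsto_subseq (x := fun n => (p n, q n))
      fun n => ⟨(hpq n).norm_left, (hpq n).norm_right⟩
  have hp : Tendsto (p ∘ φ) atTop (𝓝 p') := (continuous_fst.tendsto _).comp hlim
  have hq : Tendsto (q ∘ φ) atTop (𝓝 q') := (continuous_snd.tendsto _).comp hlim
  have hwedge {r : ℕ → ℝ × ℝ} {r' : ℝ × ℝ} (hr : Tendsto r atTop (𝓝 r'))
      (hρ : ∀ n, wedge (k' (φ n)) (r n) = ρ) : wedge k r' = ρ :=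
    tendsto_nhds_unique ((continuous_wedge.tendsto (k, r')).comp
      ((hk'.comp hφ.tendsto_atTop).prodMk_nhds hr)) (by simp [Function.comp_def, hρ])
  have hm : Tendsto (fun n => midpoint ℝ (p (φ n)) (q (φ n))) atTop (𝓝 (midpoint ℝ p' q')) :=
    hp.midpoint hq
  have hNm : N (midpoint ℝ p' q') = ρ :=
    tendsto_nhds_unique ((hN.continuous.tendsto _).comp hm) (by simp [Function.comp_def, hmid])
  have hne : p' ≠ q' := by
    rintro rfl
    rw [midpoint_self] at hNm
    exact hρ1.ne (hNm.symm.trans hp')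
  refine ⟨φ, hφ, ?_⟩
  rwa [hk.midpoint_eq hN hρ0 hρ1
    ⟨hne, hp', hq', hwedge hp fun n => (hpq _).wedge_left, hwedge hq fun n => (hpq _).wedge_right⟩
    h₀] at hm

theorem wedge_midpoint_nonneg (hN : IsNorm N) (hρ0 : 0 < ρ) (hρ1 : ρ < 1) (hP : PropP N ρ)
    (hk : SupportsAt N k M) {p₀ q₀ : ℝ × ℝ} (h₀ : IsChord N k ρ p₀ q₀) {h : ℝ × ℝ}
    (hh : wedge h M = 0) : 0 ≤ wedge h (midpoint ℝ p₀ q₀) := by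
  obtain ⟨k', M', hk', hM', hside⟩ := hk.exists_tendsto_tilt hN hh
  choose p q hpq _ _ using fun n => (hM' n).exists_isChord hN hρ0 hρ1
  obtain ⟨φ, -, hφ⟩ := hk.exists_tendsto_midpoint hN hρ0 hρ1 h₀ hk' hpq
    fun n => (hM' n).norm_midpoint hN hρ0 hρ1 hP (hpq n)
  refine ge_of_tendsto ((continuous_wedge.tendsto (h, _)).comp
    (tendsto_const_nhds.prodMk_nhds hφ)) (Eventually.of_forall fun n => ?_)
  have := hside _ _ ((hM' (φ n)).supportsAt_inv_smul_midpoint hN hρ0 hρ1 hP (hpq (φ n)))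
  rw [wedge_smul_right] at this
  exact (mul_nonneg_iff_of_pos_left (inv_pos.2 hρ0)).1 this

theorem eq_inv_smul_midpoint (hN : IsNorm N) (hρ0 : 0 < ρ) (hρ1 : ρ < 1) (hP : PropP N ρ)
    (hk : SupportsAt N k M) {p q : ℝ × ℝ} (hpq : IsChord N k ρ p q) :
    M = ρ⁻¹ • midpoint ℝ p q := by
  have h₁ := hk.wedge_midpoint_nonneg hN hρ0 hρ1 hP hpq (wedge_self M)
  have h₂ := hk.wedge_midpoint_nonneg hN hρ0 hρ1 hP hpq (h := -M) (by simp)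
  obtain ⟨r, hr⟩ := exists_eq_smul_of_wedge_eq_zero (hN.ne_zero_of_eq_one hk.norm_eq)
    (le_antisymm (by simpa using h₂) h₁)
  have hrρ : r = ρ := by simpa [hr, hk.wedge_eq] using hpq.wedge_midpoint
  rw [hr, hrρ, smul_smul, inv_mul_cancel₀ hρ0.ne', one_smul]

theorem point_unique (hN : IsNorm N) (hρ0 : 0 < ρ) (hρ1 : ρ < 1) (hP : PropP N ρ)
    {M' : ℝ × ℝ} (hk : SupportsAt N k M) (hk' : SupportsAt N k M') : M = M' := by
  obtain ⟨p, q, hpq, -⟩ := hk.exists_isChord hN hρ0 hρ1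
  rw [hk.eq_inv_smul_midpoint hN hρ0 hρ1 hP hpq, hk'.eq_inv_smul_midpoint hN hρ0 hρ1 hP hpq]

end SupportsAt

theorem norm_comb_lt_one (hN : IsNorm N) (hρ0 : 0 < ρ) (hρ1 : ρ < 1) (hP : PropP N ρ)
    {a b : ℝ × ℝ} (ha : N a ≤ 1) (hb : N b ≤ 1) (hab : a ≠ b) {θ : ℝ} (hθ0 : 0 < θ)
    (hθ1 : θ < 1) : N ((1 - θ) • a + θ • b) < 1 := by
  by_contra! hge
  have hz : N ((1 - θ) • a + θ • b) = 1 :=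
    le_antisymm ((hN.comb_le (by linarith) hθ0.le a b).trans (by nlinarith)) hge
  obtain ⟨k, hk⟩ := exists_supportsAt hN hz
  have hka := (hk.le a).trans ha
  have hkb := (hk.le b).trans hb
  have hsum : (1 - θ) * wedge k a + θ * wedge k b = 1 := by simpa using hk.wedge_eq
  have hka1 : wedge k a = 1 := by nlinarith
  have hkb1 : wedge k b = 1 := by nlinarith
  exact hab (SupportsAt.point_unique hN hρ0 hρ1 hP ⟨hk.le, by linarith [hk.le a], hka1⟩
    ⟨hk.le, by linarith [hk.le b], hkb1⟩)

theorem norm_add_smul_lt_one (hN : IsNorm N) (hρ0 : 0 < ρ) (hρ1 : ρ < 1) (hP : PropP N ρ)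
    {a v : ℝ × ℝ} (hv : v ≠ 0) {s₁ s₂ s₃ : ℝ} (h₁₂ : s₁ < s₂) (h₂₃ : s₂ < s₃)
    (h₁ : N (a + s₁ • v) ≤ 1) (h₃ : N (a + s₃ • v) ≤ 1) : N (a + s₂ • v) < 1 := by
  have hd : 0 < s₃ - s₁ := by linarith
  set θ := (s₂ - s₁) / (s₃ - s₁)
  have hθ : (1 - θ) * s₁ + θ * s₃ = s₂ := by simp only [θ]; field_simp; ring
  have hcomb : a + s₂ • v = (1 - θ) • (a + s₁ • v) + θ • (a + s₃ • v) := by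
    linear_combination (norm := module) -(hθ • v)
  rw [hcomb]
  refine norm_comb_lt_one hN hρ0 hρ1 hP h₁ h₃ (fun h => hv ?_) (div_pos (by linarith) hd)
    ((div_lt_one hd).2 (by linarith))
  have : (s₃ - s₁) • v = 0 := by linear_combination (norm := module) -h
  exact (smul_eq_zero.1 this).resolve_left hd.ne'

theorem eq_zero_of_norm_add_smul_le_one (hN : IsNorm N) (hρ0 : 0 < ρ) (hρ1 : ρ < 1)
    (hP : PropP N ρ) {x τ : ℝ × ℝ} (hτ : τ ≠ 0) (hx : N x = 1) (hx' : N (x - τ) = 1) {r : ℝ}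
    (hr : N (x + r • τ) ≤ 1) (hr' : N (x + r • τ - τ) ≤ 1) : r = 0 := by
  have e₁ : x + (-1 : ℝ) • τ = x - τ := by module
  have e₂ : x + (r - 1) • τ = x + r • τ - τ := by module
  rcases lt_trichotomy r 0 with h | h | h
  · have := norm_add_smul_lt_one hN hρ0 hρ1 hP hτ (a := x) (by linarith : r - 1 < -1)
      (by norm_num : (-1 : ℝ) < 0) (e₂ ▸ hr') (by rw [zero_smul, add_zero, hx])
    rw [e₁, hx'] at this
    exact absurd this (lt_irrefl 1)
  · exact h
  · have := norm_add_smul_lt_one hN hρ0 hρ1 hP hτ (a := x) (by norm_num : (-1 : ℝ) < 0) h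
      (e₁ ▸ hx'.le) hr
    rw [zero_smul, add_zero, hx] at this
    exact absurd this (lt_irrefl 1)

theorem not_three_translates (hN : IsNorm N) (hρ0 : 0 < ρ) (hρ1 : ρ < 1) (hP : PropP N ρ)
    {τ x₁ x₂ x₃ : ℝ × ℝ} (hτ : τ ≠ 0) (h₁₂ : x₁ ≠ x₂) (h₁₃ : x₁ ≠ x₃) (h₂₃ : x₂ ≠ x₃)
    (hx₁ : N x₁ = 1 ∧ N (x₁ - τ) = 1) (hx₂ : N x₂ = 1 ∧ N (x₂ - τ) = 1)
    (hx₃ : N x₃ = 1 ∧ N (x₃ - τ) = 1) : False := by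
  have same_line {x y : ℝ × ℝ} (hx : N x = 1 ∧ N (x - τ) = 1) (hy : N y = 1 ∧ N (y - τ) = 1)
      (hxy : x ≠ y) : wedge τ x ≠ wedge τ y := by
    intro h
    obtain ⟨r, hr⟩ := exists_eq_smul_of_wedge_eq_zero hτ (show wedge τ (y - x) = 0 by simp [h])
    rw [sub_eq_iff_eq_add'] at hr
    subst hr
    obtain rfl := eq_zero_of_norm_add_smul_le_one hN hρ0 hρ1 hP hτ hx.1 hx.2 hy.1.le hy.2.le
    simp at hxy
  have between {x y z : ℝ × ℝ} (hx : N x = 1 ∧ N (x - τ) = 1) (hy : N y = 1 ∧ N (y - τ) = 1)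
      (hz : N z = 1 ∧ N (z - τ) = 1) (hxy : wedge τ x < wedge τ y)
      (hyz : wedge τ y < wedge τ z) : False := by
    have hd : 0 < wedge τ z - wedge τ x := by linarith
    set θ := (wedge τ y - wedge τ x) / (wedge τ z - wedge τ x)
    have hθ0 : 0 < θ := div_pos (by linarith) hd
    have hθ1 : θ < 1 := (div_lt_one hd).2 (by linarith)
    have hxz : x ≠ z := by rintro rfl; linarith
    set c := (1 - θ) • x + θ • z
    have hc : N c < 1 := norm_comb_lt_one hN hρ0 hρ1 hP hx.1.le hz.1.le hxz hθ0 hθ1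
    have hc' : N (c - τ) < 1 := by
      rw [show c - τ = (1 - θ) • (x - τ) + θ • (z - τ) by module]
      exact norm_comb_lt_one hN hρ0 hρ1 hP hx.2.le hz.2.le (sub_left_injective.ne hxz) hθ0 hθ1
    have hcy : wedge τ (c - y) = 0 := by
      simp only [c, wedge_sub_right, wedge_add_right, wedge_smul_right, θ]
      field_simp
      ring
    obtain ⟨r, hr⟩ := exists_eq_smul_of_wedge_eq_zero hτ hcy
    rw [sub_eq_iff_eq_add'] at hr
    rw [hr] at hc hc'
    obtain rfl := eq_zero_of_norm_add_smul_le_one hN hρ0 hρ1 hP hτ hy.1 hy.2 hc.le hc'.le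
    simp [hy.1] at hc
  have h₁₂' := same_line hx₁ hx₂ h₁₂
  have h₁₃' := same_line hx₁ hx₃ h₁₃
  have h₂₃' := same_line hx₂ hx₃ h₂₃
  rcases h₁₂'.lt_or_gt with a | a <;> rcases h₁₃'.lt_or_gt with b | b <;>
    rcases h₂₃'.lt_or_gt with c | c
  exacts [between hx₁ hx₂ hx₃ a c, between hx₁ hx₃ hx₂ b c, by linarith, between hx₃ hx₁ hx₂ b a,
    between hx₂ hx₁ hx₃ a b, by linarith, between hx₂ hx₃ hx₁ c b, between hx₃ hx₂ hx₁ c a]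

theorem eq_smul_of_wedge_eq {k₁ k₂ u x : ℝ × ℝ} (hne : k₁ ≠ k₂) (h₁ : wedge k₁ u = 1)
    (h₂ : wedge k₂ u = 1) {c : ℝ} (hx₁ : wedge k₁ x = c) (hx₂ : wedge k₂ x = c) : x = c • u := by
  have hk : wedge k₁ k₂ ≠ 0 := by
    intro h
    obtain ⟨r, rfl⟩ := exists_eq_smul_of_wedge_eq_zero (by rintro rfl; simp at h₁) h
    obtain rfl : r = 1 := by simpa [h₁] using h₂
    simp at hne
  have hz₁ : wedge k₁ (x - c • u) = 0 := by simp [hx₁, h₁]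
  have hz₂ : wedge (x - c • u) k₂ = 0 := by rw [wedge_comm]; simp [hx₂, h₂]
  have := wedge_smul_eq k₁ k₂ (x - c • u)
  rw [hz₁, hz₂, zero_smul, zero_smul, add_zero, smul_eq_zero] at this
  exact sub_eq_zero.1 (this.resolve_left hk)

namespace SupportsAt

variable {k u : ℝ × ℝ}

/-- By strict convexity the chord of `wedge k` at level `ρ` is centred at `ρ u`. -/
theorem exists_norm_sub_eq_one (hN : IsNorm N) (hρ0 : 0 < ρ) (hρ1 : ρ < 1) (hP : PropP N ρ)
    (hk : SupportsAt N k u) : ∃ p, N p = 1 ∧ wedge k p = ρ ∧ N (p - (2 * ρ) • u) = 1 := by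
  obtain ⟨p, q, hpq, -⟩ := hk.exists_isChord hN hρ0 hρ1
  refine ⟨p, hpq.norm_left, hpq.wedge_left, ?_⟩
  have : p - (2 * ρ) • u = -q := by
    rw [hk.eq_inv_smul_midpoint hN hρ0 hρ1 hP hpq, midpoint_eq_half_smul_add_half_smul,
      smul_smul, mul_assoc, mul_inv_cancel₀ hρ0.ne', mul_one]
    module
  rw [this, hN.map_neg, hpq.norm_right]

theorem functional_unique (hN : IsNorm N) (hρ0 : 0 < ρ) (hρ1 : ρ < 1) (hP : PropP N ρ)
    {k' : ℝ × ℝ} (hk : SupportsAt N k u) (hk' : SupportsAt N k' u) : k = k' := by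
  by_contra hne
  have hmid : SupportsAt N ((1 / 2 : ℝ) • k + (1 / 2 : ℝ) • k') u :=
    ⟨fun x => by simp only [wedge_add_left, wedge_smul_left]; linarith [hk.le x, hk'.le x],
      hk.norm_eq, by simp [hk.wedge_eq, hk'.wedge_eq]; norm_num⟩
  have off_line {p : ℝ × ℝ} (hp : N p = 1) (h : wedge k p = ρ) (h' : wedge k' p = ρ) : False := by
    rw [eq_smul_of_wedge_eq hne hk.wedge_eq hk'.wedge_eq h h', hN.smul_of_nonneg hρ0.le,
      hk.norm_eq, mul_one] at hp
    exact hρ1.ne hp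
  obtain ⟨p₁, hp₁, hkp₁, hp₁'⟩ := hk.exists_norm_sub_eq_one hN hρ0 hρ1 hP
  obtain ⟨p₂, hp₂, hkp₂, hp₂'⟩ := hk'.exists_norm_sub_eq_one hN hρ0 hρ1 hP
  obtain ⟨p₃, hp₃, hkp₃, hp₃'⟩ := hmid.exists_norm_sub_eq_one hN hρ0 hρ1 hP
  simp only [wedge_add_left, wedge_smul_left] at hkp₃
  refine not_three_translates hN hρ0 hρ1 hP (τ := (2 * ρ) • u) ?_ ?_ ?_ ?_
    ⟨hp₁, hp₁'⟩ ⟨hp₂, hp₂'⟩ ⟨hp₃, hp₃'⟩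
  · exact smul_ne_zero (by positivity) (hN.ne_zero_of_eq_one hk.norm_eq)
  · rintro rfl; exact off_line hp₁ hkp₁ hkp₂
  · rintro rfl; exact off_line hp₁ hkp₁ (by linarith)
  · rintro rfl; exact off_line hp₂ (by linarith) hkp₂

end SupportsAt

theorem eq_of_le_norm_add_smul (hN : IsNorm N) (hρ0 : 0 < ρ) (hρ1 : ρ < 1) (hP : PropP N ρ)
    {u w w' : ℝ × ℝ} (hu : N u = 1) (hw : N w = 1) (hwu : 0 < wedge u w)
    (hB : ∀ l : ℝ, N u ≤ N (u + l • w)) (hw' : N w' = 1) (hw'u : 0 < wedge u w')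
    (hB' : ∀ l : ℝ, N u ≤ N (u + l • w')) : w' = w := by
  rw [wedge_comm] at hwu hw'u
  have heq := (supportsAt_of_le_norm_add_smul hN hu (by linarith) hB').functional_unique
    hN hρ0 hρ1 hP (supportsAt_of_le_norm_add_smul hN hu (by linarith) hB)
  have hw'w : w' = (wedge w' u / wedge w u) • w := by
    rw [div_eq_mul_inv, mul_smul, ← heq, smul_smul, mul_inv_cancel₀ (by linarith), one_smul]
  have hc : wedge w' u / wedge w u = 1 := by
    have := congrArg N hw'w
    rwa [hN.smul_of_nonneg (div_nonneg_of_nonpos (by linarith) (by linarith)), hw, hw', mul_one,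
      eq_comm] at this
  rw [hw'w, hc, one_smul]

end

/-- Under (P-ρS), every `u ∈ S` has a unique `u⊥ ∈ S` with `u ≺ u⊥`
which is Birkhoff-orthogonal to `u`: `N u ≤ N (u + λ u⊥)` for all real `λ`. -/
theorem stmt_5 (N : ℝ × ℝ → ℝ) (hN : IsNorm N) (ρ : ℝ) (hρ0 : 0 < ρ) (hρ1 : ρ < 1)
    (hP : PropP N ρ) :
    ∀ u : ℝ × ℝ, N u = 1 →
      ∃! w : ℝ × ℝ, N w = 1 ∧ 0 < wedge u w ∧ ∀ l : ℝ, N u ≤ N (u + l • w) := by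
  intro u hu
  obtain ⟨k, hk⟩ := exists_supportsAt hN hu
  have hk0 : 0 < N k := hN.pos hk.ne_zero
  have hw₀ : N ((N k)⁻¹ • -k) = 1 ∧ 0 < wedge u ((N k)⁻¹ • -k) ∧
      ∀ l : ℝ, N u ≤ N (u + l • (N k)⁻¹ • -k) := by
    refine ⟨?_, ?_, hk.le_norm_add_smul (by simp)⟩
    · rw [hN.smul_of_nonneg (inv_nonneg.2 hk0.le), hN.map_neg, inv_mul_cancel₀ hk0.ne']
    · simpa [wedge_comm u k, hk.wedge_eq] using hk0
  exact ⟨_, hw₀, fun w ⟨hw, hwu, hB⟩ =>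
    eq_of_le_norm_add_smul hN hρ0 hρ1 hP hu hw₀.1 hw₀.2.1 hw₀.2.2 hw hwu hB⟩
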